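/- arXiv:1411.1123 — 3 statements merged into one kernel-verified Lean document; each statement's English description precedes it below -/
import Mathlib

section
/- Let k_1, k_2, k_3 be integers all ≥ 2, and define ζ_S^*(a,b,c) := ζ(a,b,c) + (−1)^a ζ(a)ζ(b,c) + (−1)^{a+b} ζ(b,a)ζ(c) + (−1)^{a+b+c} ζ(c,b,a) (all multiple zeta values convergent since a,b,c ≥ 2). Then Σ_{σ ∈ S_3} ζ_S^*(k_{σ(1)}, k_{σ(2)}, k_{σ(3)}) = (1+(−1)^{k_1})(1+(−1)^{k_2})(1+(−1)^{k_3}) Σ_{σ ∈ S_3} ζ(k_{σ(1)}, k_{σ(2)}, k_{σ(3)}) + ((−1)^{k_1}+(−1)^{k_2})(1+(−1)^{k_3})(ζ(k_1+k_2, k_3) + ζ(k_3, k_1+k_2)) + ((−1)^{k_1}+(−1)^{k_3})(1+(−1)^{k_2})(ζ(k_1+k_3, k_2) + ζ(k_2, k_1+k_3)) + ((−1)^{k_2}+(−1)^{k_3})(1+(−1)^{k_1})(ζ(k_2+k_3, k_1) + ζ(k_1, k_2+k_3)). -/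
open scoped BigOperators

/-- The multiple zeta value `ζ(k₁,…,kₙ)`, summed over `m₁ > m₂ > ⋯ > mₙ ≥ 1`.
For the empty index list this equals `1`. -/
noncomputable def MZV (ks : List ℕ) : ℝ :=
  ∑' m : {f : Fin ks.length → ℕ //
      (∀ i j : Fin ks.length, i < j → f j < f i) ∧ ∀ i, 1 ≤ f i},
    ∏ i : Fin ks.length, (1 : ℝ) / (m.1 i : ℝ) ^ (ks.get i)

/-- The multiple zeta star value `ζ⋆(k₁,…,kₙ)`, summed over `m₁ ≥ m₂ ≥ ⋯ ≥ mₙ ≥ 1`. -/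
noncomputable def MZVstar (ks : List ℕ) : ℝ :=
  ∑' m : {f : Fin ks.length → ℕ //
      (∀ i j : Fin ks.length, i < j → f j ≤ f i) ∧ ∀ i, 1 ≤ f i},
    ∏ i : Fin ks.length, (1 : ℝ) / (m.1 i : ℝ) ^ (ks.get i)

/-- The Riemann zeta value `ζ(k) = Σ_{m ≥ 1} 1/m^k`. -/
noncomputable def riemannZetaVal (k : ℕ) : ℝ := ∑' m : ℕ, (1 : ℝ) / ((m : ℝ) + 1) ^ k

/-- `ζ_S^*(a,b,c) = ζ(a,b,c) + (−1)^a ζ(a)ζ(b,c) + (−1)^{a+b} ζ(b,a)ζ(c)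
+ (−1)^{a+b+c} ζ(c,b,a)`. -/
noncomputable def frmzv3 (a b c : ℕ) : ℝ :=
  MZV [a, b, c] + (-1 : ℝ) ^ a * riemannZetaVal a * MZV [b, c]
    + (-1 : ℝ) ^ (a + b) * MZV [b, a] * riemannZetaVal c
    + (-1 : ℝ) ^ (a + b + c) * MZV [c, b, a]


noncomputable def d2 (a b : ℕ) (p : ℕ × ℕ) : ℝ :=
  (1 / ((p.1 : ℝ) + (p.2 : ℝ) + 2) ^ a) * (1 / ((p.2 : ℝ) + 1) ^ b)

noncomputable def d3 (a b c : ℕ) (p : ℕ × ℕ × ℕ) : ℝ :=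
  (1 / ((p.1 : ℝ) + (p.2.1 : ℝ) + (p.2.2 : ℝ) + 3) ^ a) *
    ((1 / ((p.2.1 : ℝ) + (p.2.2 : ℝ) + 2) ^ b) * (1 / ((p.2.2 : ℝ) + 1) ^ c))

lemma d2_nonneg (a b : ℕ) (p : ℕ × ℕ) : 0 ≤ d2 a b p := by
  unfold d2; positivity

lemma d3_nonneg (a b c : ℕ) (p : ℕ × ℕ × ℕ) : 0 ≤ d3 a b c p := by
  unfold d3; positivity

noncomputable def hh (n : ℕ) : ℝ := (1 : ℝ) / ((n : ℝ) + 1) ^ 2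

lemma hh_nonneg : (0 : ℕ → ℝ) ≤ hh := fun n => by unfold hh; positivity

lemma summable_h : Summable hh := by
  unfold hh
  have := Real.summable_one_div_nat_pow (p := 2) |>.mpr (by norm_num)
  have h2 := (summable_nat_add_iff 1).mpr this
  refine h2.congr fun n => ?_
  push_cast; ring

lemma aux_le (x y : ℝ) (k : ℕ) (hk : 2 ≤ k) (hx : 1 ≤ x) (hxy : x ≤ y) :
    1 / y ^ k ≤ 1 / x ^ 2 := by
  have hx0 : 0 < x := by linarith
  have hy1 : 1 ≤ y := le_trans hx hxy
  apply one_div_le_one_div_of_le (by positivity)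
  calc x ^ 2 ≤ y ^ 2 := by nlinarith
    _ ≤ y ^ k := pow_le_pow_right₀ hy1 hk

lemma summable_zf {k : ℕ} (hk : 2 ≤ k) : Summable (fun n : ℕ => (1 : ℝ) / ((n : ℝ) + 1) ^ k) := by
  refine summable_h.of_nonneg_of_le (fun n => by positivity) fun n => ?_
  unfold hh
  exact aux_le _ _ k hk (by linarith [Nat.cast_nonneg (α := ℝ) n]) le_rfl

lemma summable_d2 {a b : ℕ} (ha : 2 ≤ a) (hb : 2 ≤ b) : Summable (d2 a b) := by
  have base : Summable (fun p : ℕ × ℕ => hh p.1 * hh p.2) :=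
    summable_h.mul_of_nonneg summable_h hh_nonneg hh_nonneg
  refine base.of_nonneg_of_le (d2_nonneg a b) fun p => ?_
  unfold d2 hh
  have h1 : 1 / ((p.1 : ℝ) + (p.2 : ℝ) + 2) ^ a ≤ 1 / ((p.1 : ℝ) + 1) ^ 2 :=
    aux_le _ _ a ha (by linarith [Nat.cast_nonneg (α := ℝ) p.1]) (by linarith [Nat.cast_nonneg (α := ℝ) p.2])
  have h2 : 1 / ((p.2 : ℝ) + 1) ^ b ≤ 1 / ((p.2 : ℝ) + 1) ^ 2 :=
    aux_le _ _ b hb (by linarith [Nat.cast_nonneg (α := ℝ) p.2]) le_rfl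
  exact mul_le_mul h1 h2 (by positivity) (by positivity)

lemma summable_d3 {a b c : ℕ} (ha : 2 ≤ a) (hb : 2 ≤ b) (hc : 2 ≤ c) : Summable (d3 a b c) := by
  have base2 : Summable (fun p : ℕ × ℕ => hh p.1 * hh p.2) :=
    summable_h.mul_of_nonneg summable_h hh_nonneg hh_nonneg
  have base : Summable (fun p : ℕ × ℕ × ℕ => hh p.1 * (hh p.2.1 * hh p.2.2)) :=
    summable_h.mul_of_nonneg base2 hh_nonneg (fun q => by
      exact mul_nonneg (hh_nonneg q.1) (hh_nonneg q.2))
  refine base.of_nonneg_of_le (d3_nonneg a b c) fun p => ?_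
  unfold d3 hh
  have h1 : 1 / ((p.1 : ℝ) + (p.2.1 : ℝ) + (p.2.2 : ℝ) + 3) ^ a ≤ 1 / ((p.1 : ℝ) + 1) ^ 2 :=
    aux_le _ _ a ha (by linarith [Nat.cast_nonneg (α := ℝ) p.1])
      (by linarith [Nat.cast_nonneg (α := ℝ) p.2.1, Nat.cast_nonneg (α := ℝ) p.2.2])
  have h2 : 1 / ((p.2.1 : ℝ) + (p.2.2 : ℝ) + 2) ^ b ≤ 1 / ((p.2.1 : ℝ) + 1) ^ 2 :=
    aux_le _ _ b hb (by linarith [Nat.cast_nonneg (α := ℝ) p.2.1]) (by linarith [Nat.cast_nonneg (α := ℝ) p.2.2])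
  have h3 : 1 / ((p.2.2 : ℝ) + 1) ^ c ≤ 1 / ((p.2.2 : ℝ) + 1) ^ 2 :=
    aux_le _ _ c hc (by linarith [Nat.cast_nonneg (α := ℝ) p.2.2]) le_rfl
  exact mul_le_mul h1 (mul_le_mul h2 h3 (by positivity) (by positivity))
    (by positivity) (by positivity)

def e2 : ℕ × ℕ ≃ {f : Fin 2 → ℕ //
    (∀ i j : Fin 2, i < j → f j < f i) ∧ ∀ i, 1 ≤ f i} where
  toFun p := ⟨![p.1 + p.2 + 2, p.2 + 1], by
    constructor
    · intro i j hij
      fin_cases i <;> fin_cases j <;> simp_all <;> omega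
    · intro i; fin_cases i <;> simp⟩
  invFun f := (f.1 0 - f.1 1 - 1, f.1 1 - 1)
  left_inv p := by simp [Prod.ext_iff]; omega
  right_inv f := by
    obtain ⟨f, h1, h2⟩ := f
    have ha : f 1 < f 0 := h1 0 1 (by decide)
    have hb : 1 ≤ f 1 := h2 1
    ext i
    fin_cases i <;> simp <;> omega

def e3 : ℕ × ℕ × ℕ ≃ {f : Fin 3 → ℕ //
    (∀ i j : Fin 3, i < j → f j < f i) ∧ ∀ i, 1 ≤ f i} where
  toFun p := ⟨![p.1 + p.2.1 + p.2.2 + 3, p.2.1 + p.2.2 + 2, p.2.2 + 1], by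
    constructor
    · intro i j hij
      fin_cases i <;> fin_cases j <;> simp_all <;> omega
    · intro i; fin_cases i <;> simp⟩
  invFun f := (f.1 0 - f.1 1 - 1, f.1 1 - f.1 2 - 1, f.1 2 - 1)
  left_inv p := by simp [Prod.ext_iff]; omega
  right_inv f := by
    obtain ⟨f, h1, h2⟩ := f
    have ha : f 1 < f 0 := h1 0 1 (by decide)
    have hb : f 2 < f 1 := h1 1 2 (by decide)
    have hc : 1 ≤ f 2 := h2 2
    ext i
    fin_cases i <;> simp <;> omega

lemma MZV2_eq (a b : ℕ) : MZV [a, b] = ∑' p : ℕ × ℕ, d2 a b p := by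
  rw [MZV]
  rw [show (∑' m : {f : Fin [a,b].length → ℕ //
      (∀ i j : Fin [a,b].length, i < j → f j < f i) ∧ ∀ i, 1 ≤ f i},
      ∏ i : Fin [a,b].length, (1 : ℝ) / (m.1 i : ℝ) ^ ([a,b].get i)) =
    ∑' m : {f : Fin 2 → ℕ //
      (∀ i j : Fin 2, i < j → f j < f i) ∧ ∀ i, 1 ≤ f i},
      ∏ i : Fin 2, (1 : ℝ) / (m.1 i : ℝ) ^ ([a,b].get i) from rfl]
  rw [← Equiv.tsum_eq e2]
  congr 1
  funext p
  simp [e2, Fin.prod_univ_two, d2]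
  push_cast
  ring

lemma MZV3_eq (a b c : ℕ) : MZV [a, b, c] = ∑' p : ℕ × ℕ × ℕ, d3 a b c p := by
  rw [MZV]
  rw [show (∑' m : {f : Fin [a,b,c].length → ℕ //
      (∀ i j : Fin [a,b,c].length, i < j → f j < f i) ∧ ∀ i, 1 ≤ f i},
      ∏ i : Fin [a,b,c].length, (1 : ℝ) / (m.1 i : ℝ) ^ ([a,b,c].get i)) =
    ∑' m : {f : Fin 3 → ℕ //
      (∀ i j : Fin 3, i < j → f j < f i) ∧ ∀ i, 1 ≤ f i},
      ∏ i : Fin 3, (1 : ℝ) / (m.1 i : ℝ) ^ ([a,b,c].get i) from rfl]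
  rw [← Equiv.tsum_eq e3]
  congr 1
  funext p
  simp [e3, Fin.prod_univ_three, d3]
  push_cast
  ring

lemma stuffle {a b c : ℕ} (ha : 2 ≤ a) (hb : 2 ≤ b) (hc : 2 ≤ c) :
    riemannZetaVal a * (∑' p : ℕ × ℕ, d2 b c p) =
      (∑' p : ℕ × ℕ × ℕ, d3 a b c p) + (∑' p : ℕ × ℕ × ℕ, d3 b a c p) +
        (∑' p : ℕ × ℕ × ℕ, d3 b c a p) + (∑' p : ℕ × ℕ, d2 (a + b) c p) +
        (∑' p : ℕ × ℕ, d2 b (a + c) p) := by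
  classical
  set F : ℕ × ℕ × ℕ → ℝ := fun p => (1 / ((p.1 : ℝ) + 1) ^ a) * d2 b c p.2 with hF
  have hFs : Summable F := (summable_zf ha).mul_of_nonneg (summable_d2 hb hc)
    (fun n => by positivity) (fun p => d2_nonneg b c p)
  have hFnn : ∀ p, 0 ≤ F p := fun p => mul_nonneg (by positivity) (d2_nonneg b c p.2)
  have hLHS : riemannZetaVal a * (∑' p : ℕ × ℕ, d2 b c p) = ∑' p : ℕ × ℕ × ℕ, F p := by
    rw [riemannZetaVal]
    exact Summable.tsum_mul_tsum (summable_zf ha) (summable_d2 hb hc) hFs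
  set G1 : ℕ × ℕ × ℕ → ℝ := fun p => if p.2.1 + p.2.2 + 1 < p.1 then F p else 0 with hG1
  set G2 : ℕ × ℕ × ℕ → ℝ := fun p => if p.1 = p.2.1 + p.2.2 + 1 then F p else 0 with hG2
  set G3 : ℕ × ℕ × ℕ → ℝ := fun p =>
    if p.2.2 < p.1 ∧ p.1 < p.2.1 + p.2.2 + 1 then F p else 0 with hG3
  set G4 : ℕ × ℕ × ℕ → ℝ := fun p => if p.1 = p.2.2 then F p else 0 with hG4
  set G5 : ℕ × ℕ × ℕ → ℝ := fun p => if p.1 < p.2.2 then F p else 0 with hG5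
  have hsplit : ∀ p, F p = G1 p + (G2 p + (G3 p + (G4 p + G5 p))) := by
    intro p
    simp only [hG1, hG2, hG3, hG4, hG5]
    split_ifs <;> first | ring1 | (exfalso; omega)
  have sG : ∀ G : ℕ × ℕ × ℕ → ℝ, (∀ p, G p = if _ : True then G p else G p) → True := fun _ _ => trivial
  have hle : ∀ (G : ℕ × ℕ × ℕ → ℝ), (∀ p, G p = 0 ∨ G p = F p) → Summable G := by
    intro G hG
    refine hFs.of_nonneg_of_le (fun p => ?_) (fun p => ?_)
    · rcases hG p with h | h <;> rw [h]; exact hFnn p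
    · rcases hG p with h | h <;> rw [h]; exact hFnn p
  have hs1 : Summable G1 := hle G1 fun p => by simp only [hG1]; split_ifs <;> simp
  have hs2 : Summable G2 := hle G2 fun p => by simp only [hG2]; split_ifs <;> simp
  have hs3 : Summable G3 := hle G3 fun p => by simp only [hG3]; split_ifs <;> simp
  have hs4 : Summable G4 := hle G4 fun p => by simp only [hG4]; split_ifs <;> simp
  have hs5 : Summable G5 := hle G5 fun p => by simp only [hG5]; split_ifs <;> simp
  have hsum : ∑' p, F p = (∑' p, G1 p) + ((∑' p, G2 p) + ((∑' p, G3 p) + ((∑' p, G4 p) + (∑' p, G5 p)))) := by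
    rw [← Summable.tsum_add hs4 hs5, ← Summable.tsum_add hs3 (hs4.add hs5), ← Summable.tsum_add hs2 (hs3.add (hs4.add hs5)),
      ← Summable.tsum_add hs1 (hs2.add (hs3.add (hs4.add hs5)))]
    exact tsum_congr hsplit
  -- G1
  have h1 : ∑' p, G1 p = ∑' p : ℕ × ℕ × ℕ, d3 a b c p := by
    have hinj : Function.Injective (fun q : ℕ × ℕ × ℕ => ((q.1 + q.2.1 + q.2.2 + 2, q.2.1, q.2.2) : ℕ × ℕ × ℕ)) := by
      intro q q' h
      simp only [Prod.ext_iff] at h ⊢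
      omega
    have hsupp : Function.support G1 ⊆ Set.range (fun q : ℕ × ℕ × ℕ => ((q.1 + q.2.1 + q.2.2 + 2, q.2.1, q.2.2) : ℕ × ℕ × ℕ)) := by
      intro p hp
      have hc : p.2.1 + p.2.2 + 1 < p.1 := by
        by_contra hcond
        exact hp (by simp only [hG1, if_neg hcond])
      exact ⟨(p.1 - p.2.1 - p.2.2 - 2, p.2.1, p.2.2), by simp [Prod.ext_iff] <;> omega⟩
    rw [← hinj.tsum_eq hsupp]
    refine tsum_congr fun q => ?_
    simp only [hG1, hF]
    rw [if_pos (by first | trivial | omega)]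
    simp only [d2, d3]
    push_cast
    ring
  -- G2
  have h2 : ∑' p, G2 p = ∑' p : ℕ × ℕ, d2 (a + b) c p := by
    have hinj : Function.Injective (fun q : ℕ × ℕ => ((q.1 + q.2 + 1, q.1, q.2) : ℕ × ℕ × ℕ)) := by
      intro q q' h
      simp only [Prod.ext_iff] at h ⊢
      omega
    have hsupp : Function.support G2 ⊆ Set.range (fun q : ℕ × ℕ => ((q.1 + q.2 + 1, q.1, q.2) : ℕ × ℕ × ℕ)) := by
      intro p hp
      have hc : p.1 = p.2.1 + p.2.2 + 1 := by
        by_contra hcond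
        exact hp (by simp only [hG2, if_neg hcond])
      exact ⟨(p.2.1, p.2.2), by simp [Prod.ext_iff] <;> omega⟩
    rw [← hinj.tsum_eq hsupp]
    refine tsum_congr fun q => ?_
    simp only [hG2, hF]
    rw [if_pos (by first | trivial | omega)]
    simp only [d2, pow_add]
    push_cast
    ring
  -- G3
  have h3 : ∑' p, G3 p = ∑' p : ℕ × ℕ × ℕ, d3 b a c p := by
    have hinj : Function.Injective (fun q : ℕ × ℕ × ℕ => ((q.2.1 + q.2.2 + 1, q.1 + q.2.1 + 1, q.2.2) : ℕ × ℕ × ℕ)) := by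
      intro q q' h
      simp only [Prod.ext_iff] at h ⊢
      omega
    have hsupp : Function.support G3 ⊆ Set.range (fun q : ℕ × ℕ × ℕ => ((q.2.1 + q.2.2 + 1, q.1 + q.2.1 + 1, q.2.2) : ℕ × ℕ × ℕ)) := by
      intro p hp
      have hc : p.2.2 < p.1 ∧ p.1 < p.2.1 + p.2.2 + 1 := by
        by_contra hcond
        exact hp (by simp only [hG3, if_neg hcond])
      exact ⟨(p.2.1 - (p.1 - p.2.2), p.1 - p.2.2 - 1, p.2.2), by simp [Prod.ext_iff] <;> omega⟩
    rw [← hinj.tsum_eq hsupp]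
    refine tsum_congr fun q => ?_
    simp only [hG3, hF]
    rw [if_pos (by first | trivial | omega)]
    simp only [d2, d3]
    push_cast
    ring
  -- G4
  have h4 : ∑' p, G4 p = ∑' p : ℕ × ℕ, d2 b (a + c) p := by
    have hinj : Function.Injective (fun q : ℕ × ℕ => ((q.2, q.1, q.2) : ℕ × ℕ × ℕ)) := by
      intro q q' h
      simp only [Prod.ext_iff] at h ⊢
      omega
    have hsupp : Function.support G4 ⊆ Set.range (fun q : ℕ × ℕ => ((q.2, q.1, q.2) : ℕ × ℕ × ℕ)) := by
      intro p hp
      have hc : p.1 = p.2.2 := by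
        by_contra hcond
        exact hp (by simp only [hG4, if_neg hcond])
      exact ⟨(p.2.1, p.2.2), by simp [Prod.ext_iff] <;> omega⟩
    rw [← hinj.tsum_eq hsupp]
    refine tsum_congr fun q => ?_
    simp only [hG4, hF]
    rw [if_pos (by first | trivial | omega)]
    simp only [d2, pow_add]
    push_cast
    ring
  -- G5
  have h5 : ∑' p, G5 p = ∑' p : ℕ × ℕ × ℕ, d3 b c a p := by
    have hinj : Function.Injective (fun q : ℕ × ℕ × ℕ => ((q.2.2, q.1, q.2.1 + q.2.2 + 1) : ℕ × ℕ × ℕ)) := by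
      intro q q' h
      simp only [Prod.ext_iff] at h ⊢
      omega
    have hsupp : Function.support G5 ⊆ Set.range (fun q : ℕ × ℕ × ℕ => ((q.2.2, q.1, q.2.1 + q.2.2 + 1) : ℕ × ℕ × ℕ)) := by
      intro p hp
      have hc : p.1 < p.2.2 := by
        by_contra hcond
        exact hp (by simp only [hG5, if_neg hcond])
      exact ⟨(p.2.1, p.2.2 - p.1 - 1, p.1), by simp [Prod.ext_iff] <;> omega⟩
    rw [← hinj.tsum_eq hsupp]
    refine tsum_congr fun q => ?_
    simp only [hG5, hF]
    rw [if_pos (by first | trivial | omega)]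
    simp only [d2, d3]
    push_cast
    ring
  rw [hLHS, hsum, h1, h2, h3, h4, h5]
  ring


open Equiv in
lemma sum_perm_fin3 (g : Equiv.Perm (Fin 3) → ℝ) :
    ∑ σ : Equiv.Perm (Fin 3), g σ =
      g 1 + g (swap 0 1) + g (swap 0 2) + g (swap 1 2)
      + g (swap 0 1 * swap 1 2) + g (swap 1 2 * swap 0 1) := by
  have : (Finset.univ : Finset (Equiv.Perm (Fin 3))) =
      {1, swap 0 1, swap 0 2, swap 1 2, swap 0 1 * swap 1 2, swap 1 2 * swap 0 1} := by decide
  rw [this, Finset.sum_insert (by decide), Finset.sum_insert (by decide),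
    Finset.sum_insert (by decide), Finset.sum_insert (by decide), Finset.sum_insert (by decide),
    Finset.sum_singleton]
  ring

/-- The symmetric sum of `ζ_S^*` over `S₃` in terms of (double) zeta values. -/
theorem symmetric_sum_frmzv3 (k : Fin 3 → ℕ) (hk : ∀ i, 2 ≤ k i) :
    ∑ σ : Equiv.Perm (Fin 3), frmzv3 (k (σ 0)) (k (σ 1)) (k (σ 2))
      = (1 + (-1 : ℝ) ^ (k 0)) * (1 + (-1 : ℝ) ^ (k 1)) * (1 + (-1 : ℝ) ^ (k 2)) *
          ∑ σ : Equiv.Perm (Fin 3), MZV [k (σ 0), k (σ 1), k (σ 2)]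
        + ((-1 : ℝ) ^ (k 0) + (-1 : ℝ) ^ (k 1)) * (1 + (-1 : ℝ) ^ (k 2)) *
            (MZV [k 0 + k 1, k 2] + MZV [k 2, k 0 + k 1])
        + ((-1 : ℝ) ^ (k 0) + (-1 : ℝ) ^ (k 2)) * (1 + (-1 : ℝ) ^ (k 1)) *
            (MZV [k 0 + k 2, k 1] + MZV [k 1, k 0 + k 2])
        + ((-1 : ℝ) ^ (k 1) + (-1 : ℝ) ^ (k 2)) * (1 + (-1 : ℝ) ^ (k 0)) *
            (MZV [k 1 + k 2, k 0] + MZV [k 0, k 1 + k 2]) := by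
  rw [sum_perm_fin3, sum_perm_fin3]
  simp only [show ((Equiv.swap (0:Fin 3) 1) 0) = 1 by decide,
    show ((Equiv.swap (0:Fin 3) 1) 1) = 0 by decide,
    show ((Equiv.swap (0:Fin 3) 1) 2) = 2 by decide,
    show ((Equiv.swap (0:Fin 3) 2) 0) = 2 by decide,
    show ((Equiv.swap (0:Fin 3) 2) 1) = 1 by decide,
    show ((Equiv.swap (0:Fin 3) 2) 2) = 0 by decide,
    show ((Equiv.swap (1:Fin 3) 2) 0) = 0 by decide,
    show ((Equiv.swap (1:Fin 3) 2) 1) = 2 by decide,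
    show ((Equiv.swap (1:Fin 3) 2) 2) = 1 by decide,
    show (((Equiv.swap 0 1 * Equiv.swap 1 2 : Equiv.Perm (Fin 3))) 0) = 1 by decide,
    show (((Equiv.swap 0 1 * Equiv.swap 1 2 : Equiv.Perm (Fin 3))) 1) = 2 by decide,
    show (((Equiv.swap 0 1 * Equiv.swap 1 2 : Equiv.Perm (Fin 3))) 2) = 0 by decide,
    show (((Equiv.swap 1 2 * Equiv.swap 0 1 : Equiv.Perm (Fin 3))) 0) = 2 by decide,
    show (((Equiv.swap 1 2 * Equiv.swap 0 1 : Equiv.Perm (Fin 3))) 1) = 0 by decide,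
    show (((Equiv.swap 1 2 * Equiv.swap 0 1 : Equiv.Perm (Fin 3))) 2) = 1 by decide,
    show ((1 : Equiv.Perm (Fin 3)) 0) = 0 from rfl,
    show ((1 : Equiv.Perm (Fin 3)) 1) = 1 from rfl,
    show ((1 : Equiv.Perm (Fin 3)) 2) = 2 from rfl]
  simp only [frmzv3, MZV3_eq, MZV2_eq]
  have H012 := stuffle (hk 0) (hk 1) (hk 2)
  have H021 := stuffle (hk 0) (hk 2) (hk 1)
  have H102 := stuffle (hk 1) (hk 0) (hk 2)
  rw [Nat.add_comm (k 1) (k 0)] at H102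
  have H120 := stuffle (hk 1) (hk 2) (hk 0)
  rw [Nat.add_comm (k 1) (k 0)] at H120
  have H201 := stuffle (hk 2) (hk 0) (hk 1)
  rw [Nat.add_comm (k 2) (k 0), Nat.add_comm (k 2) (k 1)] at H201
  have H210 := stuffle (hk 2) (hk 1) (hk 0)
  rw [Nat.add_comm (k 2) (k 0), Nat.add_comm (k 2) (k 1)] at H210
  linear_combination
    ((-1:ℝ) ^ (k 0) + (-1:ℝ) ^ (k 1) * (-1:ℝ) ^ (k 2)) * (H012 + H021) +
    ((-1:ℝ) ^ (k 1) + (-1:ℝ) ^ (k 0) * (-1:ℝ) ^ (k 2)) * (H102 + H120) +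
    ((-1:ℝ) ^ (k 2) + (-1:ℝ) ^ (k 0) * (-1:ℝ) ^ (k 1)) * (H201 + H210)
end

section
/- For all real numbers X and Y with |X| + |Y| < 1, Γ(1−X)Γ(1−Y)/Γ(1−X−Y) = exp( Σ_{n ≥ 2} ζ(n) · (X^n + Y^n − (X+Y)^n)/n ), the series on the right converging absolutely. -/
open scoped BigOperators
open Filter

namespace GammaRatioAux

noncomputable def f (X Y : ℝ) (m n : ℕ) : ℝ :=
  ((X / ((m : ℝ) + 1)) ^ (n + 1) + (Y / ((m : ℝ) + 1)) ^ (n + 1)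
    - ((X + Y) / ((m : ℝ) + 1)) ^ (n + 1)) / ((n : ℝ) + 1)

noncomputable def L (X Y : ℝ) (m : ℕ) : ℝ :=
  Real.log (1 - (X + Y) / ((m : ℝ) + 1)) - Real.log (1 - X / ((m : ℝ) + 1))
    - Real.log (1 - Y / ((m : ℝ) + 1))

lemma habs {X Y : ℝ} (h : |X| + |Y| < 1) : |X| < 1 ∧ |Y| < 1 ∧ |X + Y| < 1 := by
  have hx := abs_nonneg X
  have hy := abs_nonneg Y
  exact ⟨by linarith, by linarith, lt_of_le_of_lt (abs_add_le X Y) h⟩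

lemma key_bound {X Y : ℝ} (h : |X| + |Y| < 1) (m n : ℕ) :
    |f X Y m n| ≤ 3 / ((m : ℝ) + 1) ^ 2 * (|X| + |Y|) ^ n := by
  set M : ℝ := (m : ℝ) + 1 with hM
  have hM1 : (1 : ℝ) ≤ M := by simp [hM]
  have hM0 : (0 : ℝ) < M := by linarith
  set r : ℝ := |X| + |Y| with hr
  have hr0 : 0 ≤ r := by positivity
  have hr1 : r < 1 := h
  cases n with
  | zero =>
    have : f X Y m 0 = 0 := by
      simp only [f, pow_one, Nat.cast_zero, zero_add, div_one, add_div]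
      ring
    rw [this, abs_zero]
    positivity
  | succ n =>
    have h1 : ∀ t : ℝ, |t| ≤ r → |(t / M) ^ (n + 2)| ≤ r ^ (n + 1) / M ^ 2 := by
      intro t ht
      rw [abs_pow, abs_div, abs_of_pos hM0]
      calc (|t| / M) ^ (n + 2) ≤ (r / M) ^ (n + 2) := by gcongr
        _ = r ^ (n + 2) / M ^ (n + 2) := by rw [div_pow]
        _ ≤ r ^ (n + 1) / M ^ 2 := by
            apply div_le_div₀ (by positivity)
            · exact pow_le_pow_of_le_one hr0 hr1.le (by omega)
            · positivity
            · exact pow_le_pow_right₀ hM1 (by omega)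
    have e1 : |(X / M) ^ (n + 2)| ≤ r ^ (n + 1) / M ^ 2 :=
      h1 X (le_add_of_nonneg_right (abs_nonneg Y))
    have e2 : |(Y / M) ^ (n + 2)| ≤ r ^ (n + 1) / M ^ 2 :=
      h1 Y (le_add_of_nonneg_left (abs_nonneg X))
    have e3 : |((X + Y) / M) ^ (n + 2)| ≤ r ^ (n + 1) / M ^ 2 :=
      h1 (X + Y) (abs_add_le X Y)
    have hn1 : (1 : ℝ) ≤ |((n : ℝ) + 1) + 1| := by
      rw [abs_of_pos (by positivity)]; linarith [Nat.cast_nonneg (α := ℝ) n]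
    calc |f X Y m (n + 1)|
        ≤ |(X / M) ^ (n + 2) + (Y / M) ^ (n + 2) - ((X + Y) / M) ^ (n + 2)| := by
          rw [f, abs_div]
          push_cast
          exact div_le_self (abs_nonneg _) hn1
      _ ≤ |(X / M) ^ (n + 2)| + |(Y / M) ^ (n + 2)| + |((X + Y) / M) ^ (n + 2)| :=
          (abs_sub _ _).trans (by gcongr; exact abs_add_le _ _)
      _ ≤ 3 * (r ^ (n + 1) / M ^ 2) := by linarith
      _ = 3 / M ^ 2 * r ^ (n + 1) := by ring

lemma summable_uncurry {X Y : ℝ} (h : |X| + |Y| < 1) :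
    Summable fun p : ℕ × ℕ => |f X Y p.1 p.2| := by
  have hr0 : 0 ≤ |X| + |Y| := by positivity
  have h2 : Summable fun m : ℕ => (1 : ℝ) / (m : ℝ) ^ 2 :=
    Real.summable_one_div_nat_pow.mpr one_lt_two
  have h3 : Summable fun m : ℕ => (1 : ℝ) / ((m : ℝ) + 1) ^ 2 := by
    have := (summable_nat_add_iff 1).mpr h2
    simpa [Nat.cast_add] using this
  have h4 : Summable fun m : ℕ => 3 / ((m : ℝ) + 1) ^ 2 := by
    simpa [div_eq_mul_inv, one_div] using h3.mul_left 3
  have hg : Summable fun n : ℕ => (|X| + |Y|) ^ n :=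
    summable_geometric_of_lt_one hr0 h
  have hB : Summable fun p : ℕ × ℕ =>
      (3 / ((p.1 : ℝ) + 1) ^ 2) * (|X| + |Y|) ^ p.2 :=
    h4.mul_of_nonneg hg (fun m => by positivity) (fun n => by positivity)
  exact Summable.of_nonneg_of_le (fun p => abs_nonneg _)
    (fun p => key_bound h p.1 p.2) hB

end GammaRatioAux

namespace GammaRatioAux

lemma row_hasSum {X Y : ℝ} (h : |X| + |Y| < 1) (m : ℕ) :
    HasSum (f X Y m) (L X Y m) := by
  set M : ℝ := (m : ℝ) + 1 with hM
  have hM1 : (1 : ℝ) ≤ M := by simp [hM]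
  have hM0 : (0 : ℝ) < M := by linarith
  have hdiv : ∀ t : ℝ, |t| < 1 → |t / M| < 1 := by
    intro t ht
    rw [abs_div, abs_of_pos hM0]
    calc |t| / M ≤ |t| / 1 := by gcongr
      _ < 1 := by simpa using ht
  have hA := Real.hasSum_pow_div_log_of_abs_lt_one (hdiv X (habs h).1)
  have hB := Real.hasSum_pow_div_log_of_abs_lt_one (hdiv Y (habs h).2.1)
  have hC := Real.hasSum_pow_div_log_of_abs_lt_one (hdiv (X + Y) (habs h).2.2)
  have h' := (hA.add hB).sub hC
  have heq : (fun n : ℕ => (X / M) ^ (n + 1) / ((n : ℝ) + 1)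
      + (Y / M) ^ (n + 1) / ((n : ℝ) + 1) - ((X + Y) / M) ^ (n + 1) / ((n : ℝ) + 1))
      = f X Y m := by
    funext n
    simp only [f]
    ring
  rw [heq] at h'
  convert h' using 1
  · rfl
  simp only [L]
  ring

lemma hasSum_L {X Y : ℝ} (h : |X| + |Y| < 1) :
    HasSum (L X Y) (∑' p : ℕ × ℕ, f X Y p.1 p.2) := by
  have hF : Summable fun p : ℕ × ℕ => f X Y p.1 p.2 :=
    (summable_uncurry h).of_abs
  have h1 : (∑' p : ℕ × ℕ, f X Y p.1 p.2) = ∑' m, L X Y m := by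
    rw [hF.tsum_prod]
    exact tsum_congr fun m => (row_hasSum h m).tsum_eq
  have h2 : Summable (L X Y) := (hF.prod).congr fun m => (row_hasSum h m).tsum_eq
  exact h1 ▸ h2.hasSum

lemma colsum_summable {X Y : ℝ} (h : |X| + |Y| < 1) :
    Summable fun n : ℕ => ∑' m : ℕ, f X Y m n := by
  have hF : Summable fun p : ℕ × ℕ => f X Y p.1 p.2 :=
    (summable_uncurry h).of_abs
  exact hF.prod_symm.prod

lemma colsum_zero (X Y : ℝ) : (∑' m : ℕ, f X Y m 0) = 0 := by
  have : ∀ m : ℕ, f X Y m 0 = 0 := by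
    intro m
    simp only [f, pow_one, Nat.cast_zero, zero_add, div_one, add_div]
    ring
  simp [this]

lemma colsum_succ (X Y : ℝ) (n : ℕ) :
    (∑' m : ℕ, f X Y m (n + 1)) =
      riemannZetaVal (n + 2) * (X ^ (n + 2) + Y ^ (n + 2) - (X + Y) ^ (n + 2))
        / ((n : ℝ) + 2) := by
  have heq : ∀ m : ℕ, f X Y m (n + 1) =
      ((X ^ (n + 2) + Y ^ (n + 2) - (X + Y) ^ (n + 2)) / ((n : ℝ) + 2)) *
        ((1 : ℝ) / ((m : ℝ) + 1) ^ (n + 2)) := by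
    intro m
    have hM0 : (0 : ℝ) < (m : ℝ) + 1 := by positivity
    simp only [f, div_pow]
    push_cast
    rw [← add_div, div_sub_div_same]
    ring
  rw [tsum_congr heq, tsum_mul_left, riemannZetaVal]
  ring

lemma tsum_eq {X Y : ℝ} (h : |X| + |Y| < 1) :
    (∑' p : ℕ × ℕ, f X Y p.1 p.2) =
      ∑' n : ℕ, riemannZetaVal (n + 2) *
        (X ^ (n + 2) + Y ^ (n + 2) - (X + Y) ^ (n + 2)) / ((n : ℝ) + 2) := by
  have hF : Summable fun p : ℕ × ℕ => f X Y p.1 p.2 :=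
    (summable_uncurry h).of_abs
  have hF' : Summable (Function.uncurry (f X Y)) := hF
  have h1 : (∑' p : ℕ × ℕ, f X Y p.1 p.2) = ∑' n, ∑' m, f X Y m n := by
    rw [hF.tsum_prod]
    exact (hF'.tsum_comm).symm
  rw [h1, (colsum_summable h).tsum_eq_zero_add, colsum_zero, zero_add]
  exact tsum_congr fun n => colsum_succ X Y n

lemma summable_T {X Y : ℝ} (h : |X| + |Y| < 1) :
    Summable fun n : ℕ =>
      |riemannZetaVal (n + 2) *
        (X ^ (n + 2) + Y ^ (n + 2) - (X + Y) ^ (n + 2)) / ((n : ℝ) + 2)| := by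
  apply Summable.abs
  have := (summable_nat_add_iff 1).mpr (colsum_summable h)
  exact this.congr fun n => colsum_succ X Y n

end GammaRatioAux

namespace GammaRatioAux

noncomputable def factor (X Y : ℝ) (j : ℕ) : ℝ :=
  (((j : ℝ) + 1) * (((j : ℝ) + 1) - X - Y)) / (((((j : ℝ) + 1) - X)) * ((((j : ℝ) + 1) - Y)))

lemma factor_pos {X Y : ℝ} (h : |X| + |Y| < 1) (j : ℕ) : 0 < factor X Y j := by
  have hx : X < 1 := lt_of_le_of_lt (le_abs_self X) (habs h).1
  have hy : Y < 1 := lt_of_le_of_lt (le_abs_self Y) (habs h).2.1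
  have hxy : X + Y < 1 := lt_of_le_of_lt (le_abs_self _) (habs h).2.2
  have hj : (0 : ℝ) ≤ (j : ℝ) := Nat.cast_nonneg j
  apply div_pos (mul_pos (by linarith) (by linarith)) (mul_pos (by linarith) (by linarith))

lemma log_factor {X Y : ℝ} (h : |X| + |Y| < 1) (j : ℕ) :
    Real.log (factor X Y j) = L X Y j := by
  set M : ℝ := (j : ℝ) + 1 with hMdef
  have hM1 : (1 : ℝ) ≤ M := by simp [hMdef]
  have hM0 : (0 : ℝ) < M := by linarith
  have hpos : ∀ t : ℝ, |t| < 1 → 0 < 1 - t / M := by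
    intro t ht
    have h1 : t / M ≤ |t| / M := by gcongr; exact le_abs_self t
    have h2 : |t| / M ≤ |t| / 1 := by gcongr
    simp only [div_one] at h2
    linarith
  have h1 := hpos X (habs h).1
  have h2 := hpos Y (habs h).2.1
  have h3 := hpos (X + Y) (habs h).2.2
  have hMX : 0 < M - X := by
    have := (div_lt_one hM0).mp (by linarith : X / M < 1); linarith
  have hMY : 0 < M - Y := by
    have := (div_lt_one hM0).mp (by linarith : Y / M < 1); linarith
  have hfeq : factor X Y j = (1 - (X + Y) / M) / ((1 - X / M) * (1 - Y / M)) := by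
    rw [factor, ← hMdef]
    rw [div_eq_div_iff (by positivity) (by positivity)]
    field_simp
    ring
  rw [hfeq, Real.log_div (by positivity) (by positivity),
    Real.log_mul (by positivity) (by positivity), L]
  ring

lemma prod_tendsto {X Y : ℝ} (h : |X| + |Y| < 1) :
    Filter.Tendsto (fun N : ℕ => ∏ j ∈ Finset.range N, factor X Y j) atTop
      (nhds (Real.exp (∑' p : ℕ × ℕ, f X Y p.1 p.2))) := by
  have heq : (fun N : ℕ => ∏ j ∈ Finset.range N, factor X Y j)
      = fun N : ℕ => Real.exp (∑ j ∈ Finset.range N, L X Y j) := by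
    funext N
    rw [Real.exp_sum]
    refine Finset.prod_congr rfl fun j _ => ?_
    rw [← log_factor h j, Real.exp_log (factor_pos h j)]
  rw [heq]
  exact (Real.continuous_exp.tendsto _).comp ((hasSum_L h).tendsto_sum_nat)

lemma ratio_aux (n : ℕ) (A B C : ℝ) (hA : A ≠ 0) (hB : B ≠ 0) (hC : C ≠ 0)
    (u v w F : ℝ) (hF : F ≠ 0) (hw : w ≠ 0) (huv : u * v = (n : ℝ) * w) :
    (u * F / A) * (v * F / B) / (w * F / C)
      = ((n : ℝ) / ((n : ℝ) + 1)) * (((n : ℝ) + 1) * F * C / (A * B)) := by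
  have hn1 : ((n : ℝ) + 1) ≠ 0 := by positivity
  field_simp
  linear_combination huv

lemma gammaSeq_eq {X Y : ℝ} (h : |X| + |Y| < 1) {n : ℕ} (hn : 1 ≤ n) :
    Real.GammaSeq (1 - X) n * Real.GammaSeq (1 - Y) n / Real.GammaSeq (1 - X - Y) n
      = ((n : ℝ) / ((n : ℝ) + 1)) * ∏ j ∈ Finset.range (n + 1), factor X Y j := by
  have hx : X < 1 := lt_of_le_of_lt (le_abs_self X) (habs h).1
  have hy : Y < 1 := lt_of_le_of_lt (le_abs_self Y) (habs h).2.1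
  have hxy : X + Y < 1 := lt_of_le_of_lt (le_abs_self _) (habs h).2.2
  have hn0 : (0 : ℝ) < (n : ℝ) := by exact_mod_cast hn
  have hApos : (0 : ℝ) < ∏ j ∈ Finset.range (n + 1), (1 - X + (j : ℝ)) :=
    Finset.prod_pos fun j _ => by have := Nat.cast_nonneg (α := ℝ) j; linarith
  have hBpos : (0 : ℝ) < ∏ j ∈ Finset.range (n + 1), (1 - Y + (j : ℝ)) :=
    Finset.prod_pos fun j _ => by have := Nat.cast_nonneg (α := ℝ) j; linarith
  have hCpos : (0 : ℝ) < ∏ j ∈ Finset.range (n + 1), (1 - X - Y + (j : ℝ)) :=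
    Finset.prod_pos fun j _ => by have := Nat.cast_nonneg (α := ℝ) j; linarith
  have hprod : ∏ j ∈ Finset.range (n + 1), factor X Y j
      = ((n : ℝ) + 1) * (Nat.factorial n : ℝ) * (∏ j ∈ Finset.range (n + 1), (1 - X - Y + (j : ℝ)))
        / ((∏ j ∈ Finset.range (n + 1), (1 - X + (j : ℝ)))
          * ∏ j ∈ Finset.range (n + 1), (1 - Y + (j : ℝ))) := by
    have h1 : ∀ j ∈ Finset.range (n + 1), factor X Y j
        = (((j : ℝ) + 1) * (1 - X - Y + (j : ℝ)))
          / ((1 - X + (j : ℝ)) * (1 - Y + (j : ℝ))) := by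
      intro j _
      rw [factor]
      ring_nf
    rw [Finset.prod_congr rfl h1, Finset.prod_div_distrib, Finset.prod_mul_distrib,
      Finset.prod_mul_distrib]
    have h2 : ∏ j ∈ Finset.range (n + 1), ((j : ℝ) + 1) = ((n : ℝ) + 1) * (Nat.factorial n : ℝ) := by
      calc ∏ j ∈ Finset.range (n + 1), ((j : ℝ) + 1)
          = ((∏ j ∈ Finset.range (n + 1), (j + 1) : ℕ) : ℝ) := by push_cast; rfl
        _ = ((Nat.factorial (n + 1) : ℕ) : ℝ) := by rw [Finset.prod_range_add_one_eq_factorial]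
        _ = ((n : ℝ) + 1) * (Nat.factorial n : ℝ) := by push_cast [Nat.factorial_succ]; ring
    rw [h2]
  have huv : (n : ℝ) ^ (1 - X) * (n : ℝ) ^ (1 - Y) = (n : ℝ) * (n : ℝ) ^ (1 - X - Y) := by
    rw [← Real.rpow_add hn0]
    have he : (1 : ℝ) - X + (1 - Y) = 1 + (1 - X - Y) := by ring
    rw [he, Real.rpow_add hn0, Real.rpow_one]
  have hFne : (Nat.factorial n : ℝ) ≠ 0 := by exact_mod_cast n.factorial_ne_zero
  have hwne : (n : ℝ) ^ (1 - X - Y) ≠ 0 := (Real.rpow_pos_of_pos hn0 _).ne'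
  simp only [Real.GammaSeq]
  rw [hprod]
  exact ratio_aux n _ _ _ hApos.ne' hBpos.ne' hCpos.ne' _ _ _ _ hFne hwne huv

end GammaRatioAux

/-- `Γ(1−X)Γ(1−Y)/Γ(1−X−Y) = exp(Σ_{n≥2} ζ(n)(Xⁿ+Yⁿ−(X+Y)ⁿ)/n)`,
the series converging absolutely. -/
theorem gamma_ratio_eq_exp (X Y : ℝ) (h : |X| + |Y| < 1) :
    Summable (fun n : ℕ =>
        |riemannZetaVal (n + 2) *
          (X ^ (n + 2) + Y ^ (n + 2) - (X + Y) ^ (n + 2)) / ((n : ℝ) + 2)|) ∧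
      Real.Gamma (1 - X) * Real.Gamma (1 - Y) / Real.Gamma (1 - X - Y)
        = Real.exp (∑' n : ℕ, riemannZetaVal (n + 2) *
            (X ^ (n + 2) + Y ^ (n + 2) - (X + Y) ^ (n + 2)) / ((n : ℝ) + 2)) := by
  refine ⟨GammaRatioAux.summable_T h, ?_⟩
  have hx : X < 1 := lt_of_le_of_lt (le_abs_self X) (GammaRatioAux.habs h).1
  have hy : Y < 1 := lt_of_le_of_lt (le_abs_self Y) (GammaRatioAux.habs h).2.1
  have hxy : X + Y < 1 := lt_of_le_of_lt (le_abs_self _) (GammaRatioAux.habs h).2.2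
  have hne : Real.Gamma (1 - X - Y) ≠ 0 :=
    (Real.Gamma_pos_of_pos (by linarith)).ne'
  have t1 : Filter.Tendsto
      (fun n : ℕ => Real.GammaSeq (1 - X) n * Real.GammaSeq (1 - Y) n
        / Real.GammaSeq (1 - X - Y) n) atTop
      (nhds (Real.Gamma (1 - X) * Real.Gamma (1 - Y) / Real.Gamma (1 - X - Y))) :=
    ((Real.GammaSeq_tendsto_Gamma (1 - X)).mul
      (Real.GammaSeq_tendsto_Gamma (1 - Y))).div
      (Real.GammaSeq_tendsto_Gamma (1 - X - Y)) hne
  have t2 : Filter.Tendsto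
      (fun n : ℕ => ((n : ℝ) / ((n : ℝ) + 1))
        * ∏ j ∈ Finset.range (n + 1), GammaRatioAux.factor X Y j) atTop
      (nhds (1 * Real.exp (∑' p : ℕ × ℕ, GammaRatioAux.f X Y p.1 p.2))) :=
    (tendsto_natCast_div_add_atTop (1 : ℝ)).mul
      ((GammaRatioAux.prod_tendsto h).comp (Filter.tendsto_add_atTop_nat 1))
  have t1' : Filter.Tendsto
      (fun n : ℕ => Real.GammaSeq (1 - X) n * Real.GammaSeq (1 - Y) n
        / Real.GammaSeq (1 - X - Y) n) atTop
      (nhds (1 * Real.exp (∑' p : ℕ × ℕ, GammaRatioAux.f X Y p.1 p.2))) := by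
    refine t2.congr' ?_
    filter_upwards [Filter.eventually_ge_atTop 1] with n hn
    exact (GammaRatioAux.gammaSeq_eq h hn).symm
  have := tendsto_nhds_unique t1 t1'
  rw [this, one_mul, GammaRatioAux.tsum_eq h]
end

section
/- For all integers k, n, i with 1 ≤ i and i + 1 ≤ n ≤ k − 1, the binomial coefficient identity (n−i)·(−1)^{i−1}·(C(k−1, i−1) + (−1)^n C(k−1, n−i)) + i·(−1)^i·(C(k−1, i) + (−1)^n C(k−1, n−i−1)) = (n−k)·(−1)^{i−1}·(C(k−1, i−1) + (−1)^{n−1} C(k−1, n−i−1)) holds, where C(a,b) denotes the binomial coefficient a choose b. -/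
/-- The binomial coefficient identity used in the induction step of the sum formula. -/
theorem binomial_identity (k n i : ℕ) (hi : 1 ≤ i) (hin : i + 1 ≤ n) (hnk : n ≤ k - 1) :
    ((n : ℤ) - i) * (-1) ^ (i - 1) *
        ((Nat.choose (k - 1) (i - 1) : ℤ) + (-1) ^ n * (Nat.choose (k - 1) (n - i) : ℤ))
      + (i : ℤ) * (-1) ^ i *
        ((Nat.choose (k - 1) i : ℤ) + (-1) ^ n * (Nat.choose (k - 1) (n - i - 1) : ℤ))
    = ((n : ℤ) - k) * (-1) ^ (i - 1) *
        ((Nat.choose (k - 1) (i - 1) : ℤ)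
          + (-1) ^ (n - 1) * (Nat.choose (k - 1) (n - i - 1) : ℤ)) := by
  obtain ⟨m, rfl⟩ : ∃ m, k = m + 1 := ⟨k - 1, by omega⟩
  obtain ⟨j, rfl⟩ : ∃ j, i = j + 1 := ⟨i - 1, by omega⟩
  obtain ⟨p, rfl⟩ : ∃ p, n = j + p + 2 := ⟨n - (j + 1) - 1, by omega⟩
  have hjm : j ≤ m := by omega
  have hpm : p ≤ m := by omega
  have e1 : j + 1 - 1 = j := by omega
  have e2 : j + p + 2 - (j + 1) = p + 1 := by omega
  have e3 : j + p + 2 - (j + 1) - 1 = p := by omega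
  have e4 : m + 1 - 1 = m := by omega
  have e5 : j + p + 2 - 1 = j + p + 1 := by omega
  rw [e1, e3, e2, e4, e5]
  have h1 : ((j : ℤ) + 1) * (Nat.choose m (j + 1) : ℤ)
      = ((m : ℤ) - j) * (Nat.choose m j : ℤ) := by
    have := Nat.choose_succ_right_eq m j
    have h := congrArg (fun x : ℕ => (x : ℤ)) this
    push_cast [Nat.cast_sub hjm] at h
    linarith [h]
  have h2 : ((p : ℤ) + 1) * (Nat.choose m (p + 1) : ℤ)
      = ((m : ℤ) - p) * (Nat.choose m p : ℤ) := by
    have := Nat.choose_succ_right_eq m p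
    have h := congrArg (fun x : ℕ => (x : ℤ)) this
    push_cast [Nat.cast_sub hpm] at h
    linarith [h]
  push_cast
  linear_combination (-(-1 : ℤ) ^ j) * h1 + ((-1 : ℤ) ^ j * (-1 : ℤ) ^ (j + p + 2)) * h2
end
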